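/- arXiv:math/0009049 — 3 statements merged into one kernel-verified Lean document; each statement's English description precedes it below -/
import Mathlib

section
/- Correspondence between temporal sprays and temporal nonlinear connections (Theorem 3.2): fix an invertible p×p real matrix A, an invertible n×n real matrix B, and an array R : Fin n → Fin p → Fin p → ℝ. Let M, M̃ : Fin n → Fin p → Fin p → ℝ be arrays and set H = (1/2)·M, H̃ = (1/2)·M̃. Then (M, M̃) satisfies the temporal nonlinear connection law ∑_μ M̃^j_{βμ}·A^μ_α = ∑_{k,γ} M^k_{γα}·B^j_k·(A⁻¹)^γ_β − R^j_{βα} (for all j, β, α) if and only if (H, H̃) satisfies the temporal spray transformation law 2·H̃^k_{μγ} = 2·∑_{j,β,α} H^j_{βα}·(A⁻¹)^α_γ·B^k_j·(A⁻¹)^β_μ − ∑_α (A⁻¹)^α_γ·R^k_{μα} (for all k, μ, γ). -/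
lemma aux1 {p : ℕ} (A : Matrix (Fin p) (Fin p) ℝ) (hAA : A * A⁻¹ = 1)
    (g : Fin p → ℝ) (γ : Fin p) :
    ∑ α, (∑ μ, g μ * A μ α) * A⁻¹ α γ = g γ := by
  calc ∑ α, (∑ μ, g μ * A μ α) * A⁻¹ α γ
      = ∑ α, ∑ μ, g μ * (A μ α * A⁻¹ α γ) := by
        simp [Finset.sum_mul, mul_assoc]
    _ = ∑ μ, ∑ α, g μ * (A μ α * A⁻¹ α γ) := Finset.sum_comm
    _ = ∑ μ, g μ * (A * A⁻¹) μ γ := by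
        simp [Matrix.mul_apply, Finset.mul_sum]
    _ = g γ := by rw [hAA]; simp [Matrix.one_apply]

lemma aux2 {p : ℕ} (A : Matrix (Fin p) (Fin p) ℝ) (hAA : A⁻¹ * A = 1)
    (g : Fin p → ℝ) (α : Fin p) :
    ∑ μ, (∑ β, g β * A⁻¹ β μ) * A μ α = g α := by
  calc ∑ μ, (∑ β, g β * A⁻¹ β μ) * A μ α
      = ∑ μ, ∑ β, g β * (A⁻¹ β μ * A μ α) := by
        simp [Finset.sum_mul, mul_assoc]
    _ = ∑ β, ∑ μ, g β * (A⁻¹ β μ * A μ α) := Finset.sum_comm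
    _ = ∑ β, g β * (A⁻¹ * A) β α := by
        simp [Matrix.mul_apply, Finset.mul_sum]
    _ = g α := by rw [hAA]; simp [Matrix.one_apply]



/-- The temporal nonlinear connection transformation law relative to `(A, B, R)`:
`∑_μ M̃^j_{βμ} A^μ_α = ∑_{k,γ} M^k_{γα} B^j_k (A⁻¹)^γ_β − R^j_{βα}`. -/
def TemporalConnectionLaw {p n : ℕ} (A : Matrix (Fin p) (Fin p) ℝ)
    (B : Matrix (Fin n) (Fin n) ℝ) (R : Fin n → Fin p → Fin p → ℝ)
    (M M' : Fin n → Fin p → Fin p → ℝ) : Prop :=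
  ∀ j β α, ∑ μ, M' j β μ * A μ α =
    (∑ k, ∑ γ, M k γ α * B j k * A⁻¹ γ β) - R j β α

/-- The temporal spray transformation law relative to `(A, B, R)`:
`2 H̃^k_{μγ} = 2 ∑_{j,β,α} H^j_{βα} (A⁻¹)^α_γ B^k_j (A⁻¹)^β_μ − ∑_α (A⁻¹)^α_γ R^k_{μα}`. -/
def TemporalSprayLaw {p n : ℕ} (A : Matrix (Fin p) (Fin p) ℝ)
    (B : Matrix (Fin n) (Fin n) ℝ) (R : Fin n → Fin p → Fin p → ℝ)
    (H H' : Fin n → Fin p → Fin p → ℝ) : Prop :=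
  ∀ k μ γ, 2 * H' k μ γ =
    2 * (∑ j, ∑ β, ∑ α, H j β α * A⁻¹ α γ * B k j * A⁻¹ β μ) -
      ∑ α, A⁻¹ α γ * R k μ α

/-- Correspondence between temporal sprays and temporal nonlinear connections
(Theorem 3.2): with `H = (1/2)·M` and `H̃ = (1/2)·M̃`, the pair `(M, M̃)` satisfies the
temporal nonlinear connection law relative to `(A, B, R)` iff `(H, H̃)` satisfies the
temporal spray transformation law relative to `(A, B, R)`. -/
theorem temporal_spray_connection_correspondence {p n : ℕ}
    (A : Matrix (Fin p) (Fin p) ℝ) (B : Matrix (Fin n) (Fin n) ℝ)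
    (hA : IsUnit A) (hB : IsUnit B)
    (R : Fin n → Fin p → Fin p → ℝ)
    (M M' H H' : Fin n → Fin p → Fin p → ℝ)
    (hH : ∀ j β α, H j β α = (1 / 2) * M j β α)
    (hH' : ∀ j β α, H' j β α = (1 / 2) * M' j β α) :
    TemporalConnectionLaw A B R M M' ↔ TemporalSprayLaw A B R H H' := by
  unfold TemporalConnectionLaw TemporalSprayLaw
  have hdet : IsUnit A.det := (Matrix.isUnit_iff_isUnit_det A).mp hA
  have hAA : A * A⁻¹ = 1 := Matrix.mul_nonsing_inv A hdet
  have hAA' : A⁻¹ * A = 1 := Matrix.nonsing_inv_mul A hdet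
  have eH : ∀ k μ γ, (2:ℝ) * (∑ j, ∑ β, ∑ α, H j β α * A⁻¹ α γ * B k j * A⁻¹ β μ)
      = ∑ j, ∑ β, ∑ α, M j β α * A⁻¹ α γ * B k j * A⁻¹ β μ := by
    intro k μ γ
    rw [Finset.mul_sum]
    refine Finset.sum_congr rfl fun j _ => ?_
    rw [Finset.mul_sum]
    refine Finset.sum_congr rfl fun β _ => ?_
    rw [Finset.mul_sum]
    refine Finset.sum_congr rfl fun α _ => ?_
    rw [hH]; ring
  have step : (∀ k μ γ, 2 * H' k μ γ =
      2 * (∑ j, ∑ β, ∑ α, H j β α * A⁻¹ α γ * B k j * A⁻¹ β μ) -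
        ∑ α, A⁻¹ α γ * R k μ α) ↔
      (∀ k μ γ, M' k μ γ =
        (∑ j, ∑ β, ∑ α, M j β α * A⁻¹ α γ * B k j * A⁻¹ β μ) -
          ∑ α, A⁻¹ α γ * R k μ α) := by
    constructor <;> intro h k μ γ <;> have := h k μ γ <;>
      rw [eH] at * <;> rw [hH'] at * <;> linarith
  rw [step]
  constructor
  · intro h k μ γ
    have base := aux1 A hAA (M' k μ) γ
    rw [← base]
    have e1 : ∑ α, (∑ μ', M' k μ μ' * A μ' α) * A⁻¹ α γ
        = ∑ α, ((∑ k', ∑ γ', M k' γ' α * B k k' * A⁻¹ γ' μ) - R k μ α) * A⁻¹ α γ := by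
      refine Finset.sum_congr rfl fun α _ => ?_
      rw [h k μ α]
    rw [e1]
    simp only [sub_mul, Finset.sum_sub_distrib, Finset.sum_mul]
    congr 1
    · calc ∑ α, ∑ k', ∑ γ', M k' γ' α * B k k' * A⁻¹ γ' μ * A⁻¹ α γ
          = ∑ k', ∑ α, ∑ γ', M k' γ' α * B k k' * A⁻¹ γ' μ * A⁻¹ α γ := Finset.sum_comm
        _ = ∑ k', ∑ γ', ∑ α, M k' γ' α * B k k' * A⁻¹ γ' μ * A⁻¹ α γ := by
            exact Finset.sum_congr rfl fun k' _ => Finset.sum_comm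
        _ = ∑ j, ∑ β, ∑ α, M j β α * A⁻¹ α γ * B k j * A⁻¹ β μ := by
            refine Finset.sum_congr rfl fun j _ => Finset.sum_congr rfl fun β _ =>
              Finset.sum_congr rfl fun α _ => ?_
            ring
    · refine Finset.sum_congr rfl fun α _ => ?_
      ring
  · intro h j β α
    have e1 : ∑ μ, M' j β μ * A μ α
        = ∑ μ, ((∑ j', ∑ β', ∑ α', M j' β' α' * A⁻¹ α' μ * B j j' * A⁻¹ β' β)
            - ∑ α', A⁻¹ α' μ * R j β α') * A μ α := by
      refine Finset.sum_congr rfl fun μ _ => ?_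
      rw [h j β μ]
    rw [e1]
    simp only [sub_mul, Finset.sum_sub_distrib]
    congr 1
    · calc ∑ μ, (∑ j', ∑ β', ∑ α', M j' β' α' * A⁻¹ α' μ * B j j' * A⁻¹ β' β) * A μ α
          = ∑ μ, ∑ j', ∑ β', (∑ α', (M j' β' α' * B j j' * A⁻¹ β' β) * A⁻¹ α' μ) * A μ α := by
            refine Finset.sum_congr rfl fun μ _ => ?_
            simp only [Finset.sum_mul]
            exact Finset.sum_congr rfl fun j' _ => Finset.sum_congr rfl fun β' _ =>
              Finset.sum_congr rfl fun α' _ => by ring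
        _ = ∑ j', ∑ μ, ∑ β', (∑ α', (M j' β' α' * B j j' * A⁻¹ β' β) * A⁻¹ α' μ) * A μ α :=
            Finset.sum_comm
        _ = ∑ j', ∑ β', ∑ μ, (∑ α', (M j' β' α' * B j j' * A⁻¹ β' β) * A⁻¹ α' μ) * A μ α :=
            Finset.sum_congr rfl fun j' _ => Finset.sum_comm
        _ = ∑ j', ∑ β', M j' β' α * B j j' * A⁻¹ β' β :=
            Finset.sum_congr rfl fun j' _ => Finset.sum_congr rfl fun β' _ =>
              aux2 A hAA' (fun α' => M j' β' α' * B j j' * A⁻¹ β' β) α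
    · have e2 : ∑ μ, (∑ α', A⁻¹ α' μ * R j β α') * A μ α
          = ∑ μ, (∑ α', R j β α' * A⁻¹ α' μ) * A μ α := by
        simp [mul_comm]
      rw [e2]
      exact aux2 A hAA' (fun α' => R j β α') α
end

section
/- A spatial h-spray induces a spatial nonlinear connection via jet-derivatives (Theorem 3.3 i): fix invertible real matrices A (p×p) and B (n×n), a symmetric invertible p×p real matrix h with transformed metric h̃ = (A⁻¹)ᵀ·h·(A⁻¹), and a real array D^k_{il} (k, i, l ∈ Fin n) symmetric in i and l. Let G, G̃ : (Fin n → Fin p → ℝ) → (Fin n → ℝ) be differentiable functions of the jet coordinates satisfying, for every jet matrix x, the h-spray law 2·G̃^k(B·x·A⁻¹) = 2·∑_j B^k_j·G^j(x) − ∑_{ε,β,i,l} h^{εβ}·D^k_{il}·x^i_ε·x^l_β. Define N^{(i)}_{(α)j}(x) = ∑_γ (∂G^i/∂x^j_γ)(x)·h_{γα} and Ñ^{(k)}_{(β)m}(y) = ∑_ε (∂G̃^k/∂y^m_ε)(y)·h̃_{εβ}. Then for every jet matrix x and all k, β, i: ∑_m Ñ^{(k)}_{(β)m}(B·x·A⁻¹)·B^m_i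 = ∑_{j,α} N^{(j)}_{(α)i}(x)·B^k_j·(A⁻¹)^α_β − ∑_{l,α} D^k_{il}·(A⁻¹)^α_β·x^l_α; that is, (N, Ñ) satisfies the spatial nonlinear connection transformation law with inhomogeneous term Q^k_{βi}(x) = ∑_{l,α} D^k_{il}(A⁻¹)^α_β x^l_α. -/
/-!
Differentiate the `h`-spray law in every jet direction. The chain rule through the linear jet
map `x ↦ B x A⁻¹` turns the left side into `Bᵀ (∂G̃^k) A⁻ᵀ`, and the quadratic term, symmetric in
both index pairs, differentiates to `2 D^k x h⁻¹`. Multiplying the resulting matrix identity on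
the right by `h A⁻¹` produces `h̃ = A⁻ᵀ h A⁻¹` on the left and cancels `h⁻¹ h` on the right;
the theorem is one entry of that identity.
-/

open Matrix

section JetGradient

variable {ι κ : Type*} [Fintype ι] [DecidableEq ι] [Fintype κ] [DecidableEq κ]

noncomputable def jetGrad (f : (ι → κ → ℝ) → ℝ) (x : ι → κ → ℝ) : Matrix ι κ ℝ :=
  Matrix.of fun m ε => fderiv ℝ f x (Pi.single m (Pi.single ε 1))

lemma jet_eq_sum_single (v : ι → κ → ℝ) :
    v = ∑ m, ∑ ε, v m ε • (Pi.single m (Pi.single ε 1) : ι → κ → ℝ) := by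
  ext j β
  simp [Finset.sum_apply, Pi.single_apply, ite_apply]

lemma jetGrad_const_mul {f : (ι → κ → ℝ) → ℝ} {x : ι → κ → ℝ} (hf : DifferentiableAt ℝ f x)
    (c : ℝ) : jetGrad (fun y => c * f y) x = c • jetGrad f x := by
  ext m ε
  simp [jetGrad, fderiv_const_mul hf]

lemma jetGrad_sub {f g : (ι → κ → ℝ) → ℝ} {x : ι → κ → ℝ} (hf : DifferentiableAt ℝ f x)
    (hg : DifferentiableAt ℝ g x) : jetGrad (fun y => f y - g y) x = jetGrad f x - jetGrad g x := by
  ext m ε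
  simp [jetGrad, fderiv_fun_sub hf hg]

lemma jetGrad_sum {α : Type*} {s : Finset α} {f : α → (ι → κ → ℝ) → ℝ} {x : ι → κ → ℝ}
    (hf : ∀ j ∈ s, DifferentiableAt ℝ (f j) x) :
    jetGrad (fun y => ∑ j ∈ s, f j y) x = ∑ j ∈ s, jetGrad (f j) x := by
  ext m ε
  simp [jetGrad, fderiv_fun_sum hf, Matrix.sum_apply]

noncomputable def jetTransform (B : Matrix ι ι ℝ) (C : Matrix κ κ ℝ) :
    (ι → κ → ℝ) →L[ℝ] (ι → κ → ℝ) :=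
  LinearMap.toContinuousLinearMap
    { toFun := fun x i α => ∑ j, ∑ β, B i j * C β α * x j β
      map_add' := fun x y => by ext; simp [mul_add, Finset.sum_add_distrib]
      map_smul' := fun c x => by
        ext; simp only [Finset.mul_sum, Pi.smul_apply, smul_eq_mul, RingHom.id_apply]
        exact Finset.sum_congr rfl fun _ _ => Finset.sum_congr rfl fun _ _ => by ring }

omit [DecidableEq ι] [DecidableEq κ] in
lemma jetTransform_apply (B : Matrix ι ι ℝ) (C : Matrix κ κ ℝ) (x : ι → κ → ℝ) (i : ι) (α : κ) :
    jetTransform B C x i α = ∑ j, ∑ β, B i j * C β α * x j β := rfl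

lemma jetTransform_single (B : Matrix ι ι ℝ) (C : Matrix κ κ ℝ) (i m : ι) (γ ε : κ) :
    jetTransform B C (Pi.single i (Pi.single γ 1)) m ε = B m i * C γ ε := by
  simp [jetTransform_apply, Pi.single_apply, ite_apply]

lemma jetGrad_comp_jetTransform {f : (ι → κ → ℝ) → ℝ} (B : Matrix ι ι ℝ) (C : Matrix κ κ ℝ)
    {x : ι → κ → ℝ} (hf : DifferentiableAt ℝ f (jetTransform B C x)) :
    jetGrad (fun y => f (jetTransform B C y)) x = Bᵀ * jetGrad f (jetTransform B C x) * Cᵀ := by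
  ext i γ
  have hchain := fderiv_comp x hf (jetTransform B C).differentiableAt
  simp only [Function.comp_def, ContinuousLinearMap.fderiv] at hchain
  simp only [jetGrad, hchain, of_apply, ContinuousLinearMap.coe_comp, Function.comp_apply]
  rw [jet_eq_sum_single (jetTransform B C (Pi.single i (Pi.single γ 1)))]
  simp only [jetTransform_single, map_sum, map_smul, smul_eq_mul, Matrix.mul_apply,
    transpose_apply, of_apply, Finset.sum_mul]
  rw [Finset.sum_comm]
  exact Finset.sum_congr rfl fun _ _ => Finset.sum_congr rfl fun _ _ => by ring

lemma jetGrad_quadratic (H : Matrix κ κ ℝ) (E : Matrix ι ι ℝ) (x : ι → κ → ℝ) :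
    jetGrad (fun y => ∑ ε, ∑ β, ∑ i, ∑ l, H ε β * E i l * y i ε * y l β) x =
      E * of x * Hᵀ + Eᵀ * of x * H := by
  let coord (i : ι) (ε : κ) : (ι → κ → ℝ) →L[ℝ] ℝ :=
    (ContinuousLinearMap.proj (R := ℝ) (φ := fun _ : κ => ℝ) ε).comp
      (ContinuousLinearMap.proj (R := ℝ) (φ := fun _ : ι => κ → ℝ) i)
  have hcoord (i : ι) (ε : κ) : HasFDerivAt (fun y : ι → κ → ℝ => y i ε) (coord i ε) x :=
    (coord i ε).hasFDerivAt
  have hq : HasFDerivAt (fun y => ∑ ε, ∑ β, ∑ i, ∑ l, H ε β * E i l * y i ε * y l β)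
      (∑ ε, ∑ β, ∑ i, ∑ l,
        ((H ε β * E i l * x i ε) • coord l β + x l β • (H ε β * E i l) • coord i ε)) x :=
    HasFDerivAt.fun_sum fun ε _ => HasFDerivAt.fun_sum fun β _ =>
      HasFDerivAt.fun_sum fun i _ => HasFDerivAt.fun_sum fun l _ =>
        ((hcoord i ε).const_mul _).mul (hcoord l β)
  ext m γ
  simp only [jetGrad, hq.fderiv, Finset.sum_add_distrib, _root_.add_apply, _root_.sum_apply,
    _root_.smul_apply, ContinuousLinearMap.comp_apply, ContinuousLinearMap.proj_apply,
    Pi.single_apply, ite_apply, Pi.zero_apply, smul_eq_mul, mul_ite, mul_one, mul_zero,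
    Finset.sum_ite_eq', Finset.mem_univ, ↓reduceIte, Finset.sum_ite_irrel, Finset.sum_const_zero,
    of_apply, Matrix.add_apply, Matrix.mul_apply, transpose_apply, coord, Finset.sum_mul]
  rw [add_comm]
  congr 1 <;> exact Finset.sum_congr rfl fun _ _ => Finset.sum_congr rfl fun _ _ => by ring

lemma jetGrad_of_sprayLaw {B E : Matrix ι ι ℝ} {C H : Matrix κ κ ℝ} (hE : Eᵀ = E) (hH : Hᵀ = H)
    {G G' : (ι → κ → ℝ) → ι → ℝ} {k : ι} {x : ι → κ → ℝ} (hG : DifferentiableAt ℝ G x)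
    (hG' : DifferentiableAt ℝ G' (jetTransform B C x))
    (hspray : ∀ y, 2 * G' (jetTransform B C y) k =
      2 * (∑ j, B k j * G y j) - ∑ ε, ∑ β, ∑ i, ∑ l, H ε β * E i l * y i ε * y l β) :
    Bᵀ * jetGrad (fun z => G' z k) (jetTransform B C x) * Cᵀ =
      ∑ j, B k j • jetGrad (fun y => G y j) x - E * of x * H := by
  have hGj (j : ι) : DifferentiableAt ℝ (fun y => G y j) x := differentiableAt_pi.mp hG j
  have hG'k : DifferentiableAt ℝ (fun z => G' z k) (jetTransform B C x) :=
    differentiableAt_pi.mp hG' k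
  have hgrad := congrArg (jetGrad · x) (funext hspray)
  rw [jetGrad_const_mul (f := fun y => G' (jetTransform B C y) k)
      (hG'k.comp x (jetTransform B C).differentiableAt),
    jetGrad_comp_jetTransform B C hG'k, jetGrad_sub (by fun_prop) (by fun_prop),
    jetGrad_const_mul (by fun_prop), jetGrad_sum fun j _ => (hGj j).const_mul _,
    jetGrad_quadratic, hE, hH] at hgrad
  simp only [jetGrad_const_mul (hGj _)] at hgrad
  rw [← two_smul ℝ (E * of x * H), ← smul_sub] at hgrad
  exact smul_right_injective _ two_ne_zero hgrad

end JetGradient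

theorem h_spray_induces_spatial_connection_general {p n : ℕ}
    (A : Matrix (Fin p) (Fin p) ℝ) (B : Matrix (Fin n) (Fin n) ℝ)
    (h : Matrix (Fin p) (Fin p) ℝ) (hh : IsUnit h) (hhsymm : h.IsSymm)
    (h' : Matrix (Fin p) (Fin p) ℝ) (hh' : h' = (A⁻¹)ᵀ * h * A⁻¹)
    (D : Fin n → Fin n → Fin n → ℝ) (hD : ∀ k i l, D k i l = D k l i)
    (G G' : (Fin n → Fin p → ℝ) → (Fin n → ℝ))
    (hG : Differentiable ℝ G) (hG' : Differentiable ℝ G')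
    (T : (Fin n → Fin p → ℝ) → (Fin n → Fin p → ℝ))
    (hT : ∀ x i α, T x i α = ∑ j, ∑ β, B i j * A⁻¹ β α * x j β)
    (hspray : ∀ x k, 2 * G' (T x) k =
      2 * (∑ j, B k j * G x j) -
        ∑ ε, ∑ β, ∑ i, ∑ l, h⁻¹ ε β * D k i l * x i ε * x l β)
    (N : (Fin n → Fin p → ℝ) → Fin n → Fin p → Fin n → ℝ)
    (hN : ∀ x i α j, N x i α j =
      ∑ γ, fderiv ℝ (fun y => G y i) x (Pi.single j (Pi.single γ 1)) * h γ α)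
    (N' : (Fin n → Fin p → ℝ) → Fin n → Fin p → Fin n → ℝ)
    (hN' : ∀ y k β m, N' y k β m =
      ∑ ε, fderiv ℝ (fun z => G' z k) y (Pi.single m (Pi.single ε 1)) * h' ε β) :
    ∀ x k β i, ∑ m, N' (T x) k β m * B m i =
      (∑ j, ∑ α, N x j α i * B k j * A⁻¹ α β) -
        ∑ l, ∑ α, D k i l * A⁻¹ α β * x l α := by
  intro x k β i
  obtain rfl : T = jetTransform B A⁻¹ := funext fun y => funext fun j => funext (hT y j)
  have hinv_symm : (h⁻¹)ᵀ = h⁻¹ := by rw [transpose_nonsing_inv, hhsymm.eq]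
  have hkey := jetGrad_of_sprayLaw (E := of (D k)) (ext fun i l => hD k l i) hinv_symm
    (hG x) (hG' _) fun y => hspray y k
  set P := jetGrad (fun z => G' z k) (jetTransform B A⁻¹ x)
  set J := ∑ j, B k j • jetGrad (fun y => G y j) x
  have hmat : Bᵀ * P * h' = J * h * A⁻¹ - of (D k) * of x * A⁻¹ :=
    calc Bᵀ * P * h' = Bᵀ * P * (A⁻¹)ᵀ * h * A⁻¹ := by rw [hh']; simp only [Matrix.mul_assoc]
      _ = (J - of (D k) * of x * h⁻¹) * h * A⁻¹ := by rw [hkey]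
      _ = J * h * A⁻¹ - of (D k) * of x * A⁻¹ := by
        rw [Matrix.sub_mul, Matrix.sub_mul, Matrix.mul_assoc (of (D k) * of x),
          nonsing_inv_mul h ((isUnit_iff_isUnit_det h).mp hh), Matrix.mul_one]
  have hlhs : ∑ m, N' (jetTransform B A⁻¹ x) k β m * B m i = (Bᵀ * P * h') i β := by
    simp only [hN', Matrix.mul_apply, transpose_apply, P, jetGrad, of_apply, Finset.sum_mul]
    rw [Finset.sum_comm]
    exact Finset.sum_congr rfl fun _ _ => Finset.sum_congr rfl fun _ _ => by ring
  have hrhs : (∑ j, ∑ α, N x j α i * B k j * A⁻¹ α β) = (J * h * A⁻¹) i β := by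
    simp only [hN, Matrix.mul_apply, J, Matrix.sum_apply, Matrix.smul_apply, jetGrad, of_apply,
      Finset.sum_mul, smul_eq_mul]
    rw [Finset.sum_comm]
    refine Finset.sum_congr rfl fun _ _ => ?_
    rw [Finset.sum_comm]
    exact Finset.sum_congr rfl fun _ _ => Finset.sum_congr rfl fun _ _ => by ring
  have hquad : ∑ l, ∑ α, D k i l * A⁻¹ α β * x l α = (of (D k) * of x * A⁻¹) i β := by
    simp only [Matrix.mul_apply, of_apply, Finset.sum_mul]
    rw [Finset.sum_comm]
    exact Finset.sum_congr rfl fun _ _ => Finset.sum_congr rfl fun _ _ => by ring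
  rw [hlhs, hrhs, hquad, hmat, Matrix.sub_apply]

/-- A spatial `h`-spray induces a spatial nonlinear connection via jet-derivatives
(Theorem 3.3 i): fix a coordinate change with invertible temporal Jacobian `A`,
invertible spatial Jacobian `B`, symmetric second-derivative array
`D^k_{il} = ∂²x̃^k/∂x^i∂x^l`, a symmetric invertible temporal metric `h` with
transformed metric `h̃ = (A⁻¹)ᵀ h A⁻¹`, and jets transforming by `x ↦ B·x·A⁻¹`.
If the differentiable functions `G, G̃` of the jet coordinates satisfy the `h`-spray law
`2 G̃^k(B·x·A⁻¹) = 2 ∑_j B^k_j G^j(x) − ∑_{ε,β,i,l} h^{εβ} D^k_{il} x^i_ε x^l_β`,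
then `N^{(i)}_{(α)j}(x) = ∑_γ (∂G^i/∂x^j_γ)(x) h_{γα}` and
`Ñ^{(k)}_{(β)m}(y) = ∑_ε (∂G̃^k/∂y^m_ε)(y) h̃_{εβ}` satisfy the spatial nonlinear
connection transformation law
`∑_m Ñ^{(k)}_{(β)m}(B·x·A⁻¹) B^m_i = ∑_{j,α} N^{(j)}_{(α)i}(x) B^k_j (A⁻¹)^α_β −
∑_{l,α} D^k_{il} (A⁻¹)^α_β x^l_α`. -/
theorem h_spray_induces_spatial_connection {p n : ℕ}
    (A : Matrix (Fin p) (Fin p) ℝ) (B : Matrix (Fin n) (Fin n) ℝ)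
    (hA : IsUnit A) (hB : IsUnit B)
    (h : Matrix (Fin p) (Fin p) ℝ) (hh : IsUnit h) (hhsymm : h.IsSymm)
    (h' : Matrix (Fin p) (Fin p) ℝ) (hh' : h' = (A⁻¹)ᵀ * h * A⁻¹)
    (D : Fin n → Fin n → Fin n → ℝ) (hD : ∀ k i l, D k i l = D k l i)
    (G G' : (Fin n → Fin p → ℝ) → (Fin n → ℝ))
    (hG : Differentiable ℝ G) (hG' : Differentiable ℝ G')
    (T : (Fin n → Fin p → ℝ) → (Fin n → Fin p → ℝ))
    (hT : ∀ x i α, T x i α = ∑ j, ∑ β, B i j * A⁻¹ β α * x j β)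
    (hspray : ∀ x k, 2 * G' (T x) k =
      2 * (∑ j, B k j * G x j) -
        ∑ ε, ∑ β, ∑ i, ∑ l, h⁻¹ ε β * D k i l * x i ε * x l β)
    (N : (Fin n → Fin p → ℝ) → Fin n → Fin p → Fin n → ℝ)
    (hN : ∀ x i α j, N x i α j =
      ∑ γ, fderiv ℝ (fun y => G y i) x (Pi.single j (Pi.single γ 1)) * h γ α)
    (N' : (Fin n → Fin p → ℝ) → Fin n → Fin p → Fin n → ℝ)
    (hN' : ∀ y k β m, N' y k β m =
      ∑ ε, fderiv ℝ (fun z => G' z k) y (Pi.single m (Pi.single ε 1)) * h' ε β) :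
    ∀ x k β i, ∑ m, N' (T x) k β m * B m i =
      (∑ j, ∑ α, N x j α i * B k j * A⁻¹ α β) -
        ∑ l, ∑ α, D k i l * A⁻¹ α β * x l α :=
  h_spray_induces_spatial_connection_general A B h hh hhsymm h' hh' D hD G G' hG hG' T hT hspray N
    hN N' hN'
end

section
/- A spatial nonlinear connection induces a spatial spray (Theorem 3.3 ii): fix invertible real matrices A (p×p) and B (n×n), jet arrays x, x̃ : Fin n → Fin p → ℝ with x̃^i_α = ∑_{j,β} B^i_j·(A⁻¹)^β_α·x^j_β, and an array Q : Fin n → Fin p → Fin n → ℝ. Suppose the pair (N, Ñ) of arrays (indices N^{(j)}_{(β)i}, j ∈ Fin n, β ∈ Fin p, i ∈ Fin n) satisfies the spatial nonlinear connection law ∑_k Ñ^j_{βk}·B^k_i = ∑_{k,γ} N^k_{γi}·B^j_k·(A⁻¹)^γ_β − Q^j_{βi} for all j, β, i. Define 2·G^{(i)}_{(α)β} = ∑_j N^{(i)}_{(α)j}·x^j_β and 2·G̃^{(i)}_{(α)β} = ∑_j Ñ^{(i)}_{(α)j}·x̃^j_β. Then (G, G̃) satisfies the spatial spray transformation law: for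 all k, μ, γ, 2·G̃^k_{μγ} = 2·∑_{j,β,α} G^j_{βα}·(A⁻¹)^α_γ·B^k_j·(A⁻¹)^β_μ − ∑_{i,β} Q^k_{μi}·(A⁻¹)^β_γ·x^i_β. -/
lemma sum4_comm' {n p : ℕ} (f : Fin n → Fin p → Fin n → Fin p → ℝ) :
    ∑ i, ∑ β, ∑ l, ∑ δ, f i β l δ = ∑ l, ∑ δ, ∑ β, ∑ i, f i β l δ := by
  calc ∑ i, ∑ β, ∑ l, ∑ δ, f i β l δ
      = ∑ i, ∑ l, ∑ β, ∑ δ, f i β l δ :=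
        Finset.sum_congr rfl fun i _ => Finset.sum_comm
    _ = ∑ l, ∑ i, ∑ β, ∑ δ, f i β l δ := Finset.sum_comm
    _ = ∑ l, ∑ β, ∑ i, ∑ δ, f i β l δ :=
        Finset.sum_congr rfl fun l _ => Finset.sum_comm
    _ = ∑ l, ∑ β, ∑ δ, ∑ i, f i β l δ :=
        Finset.sum_congr rfl fun l _ => Finset.sum_congr rfl fun β _ => Finset.sum_comm
    _ = ∑ l, ∑ δ, ∑ β, ∑ i, f i β l δ :=
        Finset.sum_congr rfl fun l _ => Finset.sum_comm

/-- A spatial nonlinear connection induces a spatial spray (Theorem 3.3 ii): fix a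
coordinate change with invertible temporal Jacobian `A`, invertible spatial Jacobian
`B`, jet coordinates related by `x̃^i_α = ∑_{j,β} B^i_j (A⁻¹)^β_α x^j_β`, and
inhomogeneous array `Q` (`Q^k_{μi} = ∂x̃^k_μ/∂x^i`). If `(N, Ñ)` satisfies the spatial
nonlinear connection law `∑_k Ñ^j_{βk} B^k_i = ∑_{k,γ} N^k_{γi} B^j_k (A⁻¹)^γ_β − Q^j_{βi}`,
then `2 G^{(i)}_{(α)β} = ∑_j N^{(i)}_{(α)j} x^j_β` and
`2 G̃^{(i)}_{(α)β} = ∑_j Ñ^{(i)}_{(α)j} x̃^j_β` satisfy the spatial spray law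
`2 G̃^k_{μγ} = 2 ∑_{j,β,α} G^j_{βα} (A⁻¹)^α_γ B^k_j (A⁻¹)^β_μ −
∑_{i,β} Q^k_{μi} (A⁻¹)^β_γ x^i_β`. -/
theorem spatial_connection_induces_spray {p n : ℕ}
    (A : Matrix (Fin p) (Fin p) ℝ) (B : Matrix (Fin n) (Fin n) ℝ)
    (hA : IsUnit A) (hB : IsUnit B)
    (x x' : Fin n → Fin p → ℝ)
    (hx : ∀ i α, x' i α = ∑ j, ∑ β, B i j * A⁻¹ β α * x j β)
    (Q : Fin n → Fin p → Fin n → ℝ)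
    (N N' : Fin n → Fin p → Fin n → ℝ)
    (hconn : ∀ j β i, ∑ k, N' j β k * B k i =
      (∑ k, ∑ γ, N k γ i * B j k * A⁻¹ γ β) - Q j β i)
    (G G' : Fin n → Fin p → Fin p → ℝ)
    (hG : ∀ i α β, 2 * G i α β = ∑ j, N i α j * x j β)
    (hG' : ∀ i α β, 2 * G' i α β = ∑ j, N' i α j * x' j β) :
    ∀ k μ γ, 2 * G' k μ γ =
      2 * (∑ j, ∑ β, ∑ α, G j β α * A⁻¹ α γ * B k j * A⁻¹ β μ) -
        ∑ i, ∑ β, Q k μ i * A⁻¹ β γ * x i β := by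
  intro k μ γ
  rw [hG']
  have step1 : ∑ j, N' k μ j * x' j γ
      = ∑ i, ∑ β, (∑ j, N' k μ j * B j i) * (A⁻¹ β γ * x i β) := by
    simp only [hx, Finset.mul_sum, Finset.sum_mul]
    rw [Finset.sum_comm]
    refine Finset.sum_congr rfl fun i _ => ?_
    rw [Finset.sum_comm]
    exact Finset.sum_congr rfl fun β _ => Finset.sum_congr rfl fun j _ => by ring
  rw [step1]
  simp only [hconn]
  have step2 : ∑ i, ∑ β, ((∑ l, ∑ δ, N l δ i * B k l * A⁻¹ δ μ) - Q k μ i) * (A⁻¹ β γ * x i β)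
      = (∑ i, ∑ β, ∑ l, ∑ δ, N l δ i * B k l * A⁻¹ δ μ * (A⁻¹ β γ * x i β))
        - ∑ i, ∑ β, Q k μ i * A⁻¹ β γ * x i β := by
    rw [← Finset.sum_sub_distrib]
    refine Finset.sum_congr rfl fun i _ => ?_
    rw [← Finset.sum_sub_distrib]
    refine Finset.sum_congr rfl fun β _ => ?_
    rw [sub_mul, Finset.sum_mul]
    congr 1
    · exact Finset.sum_congr rfl fun l _ => by rw [Finset.sum_mul]
    · ring
  rw [step2]
  congr 1
  have hG2 : 2 * (∑ j, ∑ β, ∑ α, G j β α * A⁻¹ α γ * B k j * A⁻¹ β μ)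
      = ∑ j, ∑ β, ∑ α, (2 * G j β α) * A⁻¹ α γ * B k j * A⁻¹ β μ := by
    rw [Finset.mul_sum]
    refine Finset.sum_congr rfl fun j _ => ?_
    rw [Finset.mul_sum]
    refine Finset.sum_congr rfl fun β _ => ?_
    rw [Finset.mul_sum]
    exact Finset.sum_congr rfl fun α _ => by ring
  rw [hG2]
  simp only [hG, Finset.sum_mul]
  rw [sum4_comm' (fun i β l δ => N l δ i * B k l * A⁻¹ δ μ * (A⁻¹ β γ * x i β))]
  refine Finset.sum_congr rfl fun l _ => Finset.sum_congr rfl fun δ _ =>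
    Finset.sum_congr rfl fun β _ => Finset.sum_congr rfl fun i _ => by ring
end
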